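/- Let t be an attack–defense tree term over B in which each basic event occurs at most once, let c : B → ℝ≥0 be a cost function, and let X₁ = { S ⊆ B(t) : eval_S(t) = tt } and X₂ = { S ⊆ B(t) : eval_S(t) = ff } be the sets of satisfying and unsatisfying assignments of t (both are nonempty). Then the minimal-cost bottom-up semantics satisfies V_c(t) = ( min_{S ∈ X₁} Σ_{b ∈ S} c(b), min_{S ∈ X₂} Σ_{b ∈ S} c(b) ). -/
import Mathlib


/-- Attack–defense tree terms over a type `B` of basic events. -/
inductive ADT (B : Type*) where
  | leaf : B → ADT B
  | and : ADT B → ADT B → ADT B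
  | or : ADT B → ADT B → ADT B
  | not : ADT B → ADT B

namespace ADT

variable {B : Type*} [DecidableEq B]

/-- The finite set `B(t)` of basic events occurring in a term. -/
def events : ADT B → Finset B
  | .leaf b => {b}
  | .and t₁ t₂ => events t₁ ∪ events t₂
  | .or t₁ t₂ => events t₁ ∪ events t₂
  | .not t => events t

/-- Linearity: each basic event occurs at most once in the term. -/
def Linear : ADT B → Prop
  | .leaf _ => True
  | .and t₁ t₂ => Linear t₁ ∧ Linear t₂ ∧ Disjoint (events t₁) (events t₂)
  | .or t₁ t₂ => Linear t₁ ∧ Linear t₂ ∧ Disjoint (events t₁) (events t₂)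
  | .not t => Linear t

/-- Boolean semantics `eval_S(t)` for an assignment `S ⊆ B` (the set of basic
events set to true). -/
def eval (S : Finset B) : ADT B → Bool
  | .leaf b => decide (b ∈ S)
  | .and t₁ t₂ => eval S t₁ && eval S t₂
  | .or t₁ t₂ => eval S t₁ || eval S t₂
  | .not t => !eval S t


/-- The minimal-cost bottom-up traversal semantics `V_c(t)`: the first component
is the minimal cost of succeeding, the second the minimal cost of failing. -/
def Vc (c : B → ℝ) : ADT B → ℝ × ℝ
  | .leaf b => (c b, 0)
  | .and t₁ t₂ => ((Vc c t₁).1 + (Vc c t₂).1, min (Vc c t₁).2 (Vc c t₂).2)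
  | .or t₁ t₂ => (min (Vc c t₁).1 (Vc c t₂).1, (Vc c t₁).2 + (Vc c t₂).2)
  | .not t => ((Vc c t).2, (Vc c t).1)

lemma eval_congr {S S' : Finset B} : ∀ t : ADT B,
    (∀ b ∈ events t, (b ∈ S ↔ b ∈ S')) → eval S t = eval S' t
  | .leaf b, h => by simp [eval, h b (by simp [events])]
  | .and t₁ t₂, h => by
      rw [eval, eval, eval_congr t₁ (fun b hb => h b (by simp [events, hb])),
        eval_congr t₂ (fun b hb => h b (by simp [events, hb]))]
  | .or t₁ t₂, h => by
      rw [eval, eval, eval_congr t₁ (fun b hb => h b (by simp [events, hb])),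
        eval_congr t₂ (fun b hb => h b (by simp [events, hb]))]
  | .not t, h => by rw [eval, eval, eval_congr t h]

lemma eval_inter (t : ADT B) (S : Finset B) : eval (S ∩ t.events) t = eval S t :=
  eval_congr t (fun b hb => by simp [hb])

lemma eval_union_left {t : ADT B} {S T : Finset B} (hS : S ⊆ t.events)
    (hT : Disjoint T t.events) : eval (S ∪ T) t = eval S t :=
  eval_congr t (fun b hb => by
    constructor
    · intro h
      rcases Finset.mem_union.1 h with h | h
      · exact h
      · exact absurd hb (Finset.disjoint_left.1 hT h)
    · exact fun h => Finset.mem_union_left _ h)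

lemma sat_unsat_nonempty : ∀ t : ADT B, t.Linear →
    (∃ S ⊆ t.events, t.eval S = true) ∧ (∃ S ⊆ t.events, t.eval S = false)
  | .leaf b, _ => ⟨⟨{b}, by simp [events], by simp [eval]⟩, ⟨∅, by simp, by simp [eval]⟩⟩
  | .and t₁ t₂, ⟨hl₁, hl₂, hd⟩ => by
      obtain ⟨⟨S₁, hS₁, he₁⟩, ⟨T₁, hT₁, hf₁⟩⟩ := sat_unsat_nonempty t₁ hl₁
      obtain ⟨⟨S₂, hS₂, he₂⟩, _⟩ := sat_unsat_nonempty t₂ hl₂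
      refine ⟨⟨S₁ ∪ S₂, ?_, ?_⟩, ⟨T₁, ?_, ?_⟩⟩
      · exact Finset.union_subset_union hS₁ hS₂
      · rw [eval, eval_union_left hS₁ (hd.symm.mono_left hS₂),
          Finset.union_comm, eval_union_left hS₂ (hd.mono_left hS₁), he₁, he₂]; rfl
      · exact hT₁.trans Finset.subset_union_left
      · rw [eval, hf₁]; simp
  | .or t₁ t₂, ⟨hl₁, hl₂, hd⟩ => by
      obtain ⟨⟨S₁, hS₁, he₁⟩, ⟨T₁, hT₁, hf₁⟩⟩ := sat_unsat_nonempty t₁ hl₁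
      obtain ⟨_, ⟨T₂, hT₂, hf₂⟩⟩ := sat_unsat_nonempty t₂ hl₂
      refine ⟨⟨S₁, ?_, ?_⟩, ⟨T₁ ∪ T₂, ?_, ?_⟩⟩
      · exact hS₁.trans Finset.subset_union_left
      · rw [eval, he₁]; simp
      · exact Finset.union_subset_union hT₁ hT₂
      · rw [eval, eval_union_left hT₁ (hd.symm.mono_left hT₂),
          Finset.union_comm, eval_union_left hT₂ (hd.mono_left hT₁), hf₁, hf₂]; rfl
  | .not t, hl => by
      obtain ⟨⟨S, hS, he⟩, ⟨T, hT, hf⟩⟩ := sat_unsat_nonempty t hl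
      exact ⟨⟨T, hT, by simp [eval, hf]⟩, ⟨S, hS, by simp [eval, he]⟩⟩

lemma cost_mono {c : B → ℝ} (hc : ∀ b, 0 ≤ c b) {S T : Finset B} (h : S ⊆ T) :
    ∑ b ∈ S, c b ≤ ∑ b ∈ T, c b :=
  Finset.sum_le_sum_of_subset_of_nonneg h (fun b _ _ => hc b)

section binary

variable {t₁ t₂ : ADT B} {c : B → ℝ}

/-- generic "sum" case -/
lemma inf'_sum (hd : Disjoint t₁.events t₂.events) (hc : ∀ b, 0 ≤ c b) (v₁ v₂ : Bool)
    (h₁ : (t₁.events.powerset.filter (fun S => t₁.eval S = v₁)).Nonempty)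
    (h₂ : (t₂.events.powerset.filter (fun S => t₂.eval S = v₂)).Nonempty)
    (H : ((t₁.events ∪ t₂.events).powerset.filter
        (fun S => t₁.eval S = v₁ ∧ t₂.eval S = v₂)).Nonempty) :
    ((t₁.events ∪ t₂.events).powerset.filter
        (fun S => t₁.eval S = v₁ ∧ t₂.eval S = v₂)).inf' H (fun S => ∑ b ∈ S, c b) =
      (t₁.events.powerset.filter (fun S => t₁.eval S = v₁)).inf' h₁ (fun S => ∑ b ∈ S, c b) +
      (t₂.events.powerset.filter (fun S => t₂.eval S = v₂)).inf' h₂ (fun S => ∑ b ∈ S, c b) := by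
  apply le_antisymm
  · obtain ⟨S₁, hS₁m, hS₁v⟩ := Finset.exists_mem_eq_inf' h₁ (fun S => ∑ b ∈ S, c b)
    obtain ⟨S₂, hS₂m, hS₂v⟩ := Finset.exists_mem_eq_inf' h₂ (fun S => ∑ b ∈ S, c b)
    rw [hS₁v, hS₂v]
    simp only [Finset.mem_filter, Finset.mem_powerset] at hS₁m hS₂m
    have hmem : S₁ ∪ S₂ ∈ (t₁.events ∪ t₂.events).powerset.filter
        (fun S => t₁.eval S = v₁ ∧ t₂.eval S = v₂) := by
      simp only [Finset.mem_filter, Finset.mem_powerset]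
      refine ⟨Finset.union_subset_union hS₁m.1 hS₂m.1, ?_, ?_⟩
      · rw [eval_union_left hS₁m.1 (hd.symm.mono_left hS₂m.1)]; exact hS₁m.2
      · rw [Finset.union_comm, eval_union_left hS₂m.1 (hd.mono_left hS₁m.1)]; exact hS₂m.2
    exact (Finset.inf'_le _ hmem).trans_eq (Finset.sum_union (hd.mono hS₁m.1 hS₂m.1))
  · apply Finset.le_inf'
    intro S hS
    simp only [Finset.mem_filter, Finset.mem_powerset] at hS
    obtain ⟨hSsub, he₁, he₂⟩ := hS
    have hsplit : S = (S ∩ t₁.events) ∪ (S ∩ t₂.events) := by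
      rw [← Finset.inter_union_distrib_left, Finset.inter_eq_left.2 hSsub]
    have hdisj : Disjoint (S ∩ t₁.events) (S ∩ t₂.events) :=
      hd.mono Finset.inter_subset_right Finset.inter_subset_right
    have : ∑ b ∈ S, c b = ∑ b ∈ S ∩ t₁.events, c b + ∑ b ∈ S ∩ t₂.events, c b := by
      conv_lhs => rw [hsplit]
      exact Finset.sum_union hdisj
    rw [this]
    gcongr
    · exact Finset.inf'_le _ (by
        simp only [Finset.mem_filter, Finset.mem_powerset]
        exact ⟨Finset.inter_subset_right, by rw [eval_inter]; exact he₁⟩)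
    · exact Finset.inf'_le _ (by
        simp only [Finset.mem_filter, Finset.mem_powerset]
        exact ⟨Finset.inter_subset_right, by rw [eval_inter]; exact he₂⟩)

/-- generic "min" case -/
lemma inf'_min (hd : Disjoint t₁.events t₂.events) (hc : ∀ b, 0 ≤ c b) (v₁ v₂ : Bool)
    (h₁ : (t₁.events.powerset.filter (fun S => t₁.eval S = v₁)).Nonempty)
    (h₂ : (t₂.events.powerset.filter (fun S => t₂.eval S = v₂)).Nonempty)
    (H : ((t₁.events ∪ t₂.events).powerset.filter
        (fun S => t₁.eval S = v₁ ∨ t₂.eval S = v₂)).Nonempty) :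
    ((t₁.events ∪ t₂.events).powerset.filter
        (fun S => t₁.eval S = v₁ ∨ t₂.eval S = v₂)).inf' H (fun S => ∑ b ∈ S, c b) =
      min
      ((t₁.events.powerset.filter (fun S => t₁.eval S = v₁)).inf' h₁ (fun S => ∑ b ∈ S, c b))
      ((t₂.events.powerset.filter (fun S => t₂.eval S = v₂)).inf' h₂ (fun S => ∑ b ∈ S, c b)) := by
  apply le_antisymm
  · apply le_min
    · obtain ⟨S₁, hS₁m, hS₁v⟩ := Finset.exists_mem_eq_inf' h₁ (fun S => ∑ b ∈ S, c b)
      rw [hS₁v]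
      simp only [Finset.mem_filter, Finset.mem_powerset] at hS₁m
      exact Finset.inf'_le _ (by
        simp only [Finset.mem_filter, Finset.mem_powerset]
        exact ⟨hS₁m.1.trans Finset.subset_union_left, Or.inl hS₁m.2⟩)
    · obtain ⟨S₂, hS₂m, hS₂v⟩ := Finset.exists_mem_eq_inf' h₂ (fun S => ∑ b ∈ S, c b)
      rw [hS₂v]
      simp only [Finset.mem_filter, Finset.mem_powerset] at hS₂m
      exact Finset.inf'_le _ (by
        simp only [Finset.mem_filter, Finset.mem_powerset]
        exact ⟨hS₂m.1.trans Finset.subset_union_right, Or.inr hS₂m.2⟩)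
  · apply Finset.le_inf'
    intro S hS
    simp only [Finset.mem_filter, Finset.mem_powerset] at hS
    obtain ⟨hSsub, he⟩ := hS
    rcases he with he | he
    · refine le_trans (min_le_left _ _) (le_trans (Finset.inf'_le _ ?_)
        (cost_mono hc (Finset.inter_subset_left : S ∩ t₁.events ⊆ S)))
      simp only [Finset.mem_filter, Finset.mem_powerset]
      exact ⟨Finset.inter_subset_right, by rw [eval_inter]; exact he⟩
    · refine le_trans (min_le_right _ _) (le_trans (Finset.inf'_le _ ?_)
        (cost_mono hc (Finset.inter_subset_left : S ∩ t₂.events ⊆ S)))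
      simp only [Finset.mem_filter, Finset.mem_powerset]
      exact ⟨Finset.inter_subset_right, by rw [eval_inter]; exact he⟩

end binary


lemma filt_nonempty (t : ADT B) (hlin : t.Linear) (v : Bool) :
    (t.events.powerset.filter (fun S => t.eval S = v)).Nonempty := by
  obtain ⟨⟨S, hS, he⟩, ⟨T, hT, hf⟩⟩ := sat_unsat_nonempty t hlin
  cases v
  · exact ⟨T, by simp only [Finset.mem_filter, Finset.mem_powerset]; exact ⟨hT, hf⟩⟩
  · exact ⟨S, by simp only [Finset.mem_filter, Finset.mem_powerset]; exact ⟨hS, he⟩⟩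

/-- for a linear term with nonnegative costs, the minimal-cost
bottom-up semantics computes the minimum, over satisfying (resp. unsatisfying)
assignments `S`, of the total cost of the basic events in `S`. -/
theorem Vc_eq_min_costs (t : ADT B) (hlin : t.Linear) (c : B → ℝ)
    (hc : ∀ b, 0 ≤ c b)
    (h₁ : (t.events.powerset.filter (fun S => t.eval S = true)).Nonempty)
    (h₂ : (t.events.powerset.filter (fun S => t.eval S = false)).Nonempty) :
    Vc c t =
      ((t.events.powerset.filter (fun S => t.eval S = true)).inf'
          h₁ (fun S => ∑ b ∈ S, c b),
        (t.events.powerset.filter (fun S => t.eval S = false)).inf'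
          h₂ (fun S => ∑ b ∈ S, c b)) := by
  induction t with
  | leaf b =>
    have e1 : ((leaf b : ADT B).events.powerset.filter
        (fun S => (leaf b : ADT B).eval S = true)) = {{b}} := by
      ext S
      simp only [events, eval, Finset.mem_filter, Finset.mem_powerset,
        Finset.subset_singleton_iff, decide_eq_true_eq, Finset.mem_singleton]
      constructor
      · rintro ⟨h | rfl, hb⟩
        · subst h; simp at hb
        · rfl
      · rintro rfl; simp
    have e2 : ((leaf b : ADT B).events.powerset.filter
        (fun S => (leaf b : ADT B).eval S = false)) = {∅} := by
      ext S
      simp only [events, eval, Finset.mem_filter, Finset.mem_powerset,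
        Finset.subset_singleton_iff, decide_eq_false_iff_not, Finset.mem_singleton]
      constructor
      · rintro ⟨h | rfl, hb⟩
        · exact h
        · simp at hb
      · rintro rfl; simp
    simp only [Vc, e1, e2, Finset.inf'_singleton, Finset.sum_singleton, Finset.sum_empty]
  | and t₁ t₂ ih₁ ih₂ =>
    obtain ⟨hl₁, hl₂, hd⟩ := hlin
    have n₁t := filt_nonempty t₁ hl₁ true
    have n₁f := filt_nonempty t₁ hl₁ false
    have n₂t := filt_nonempty t₂ hl₂ true
    have n₂f := filt_nonempty t₂ hl₂ false
    have v₁ := ih₁ hl₁ n₁t n₁f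
    have v₂ := ih₂ hl₂ n₂t n₂f
    have e1 : ((and t₁ t₂).events.powerset.filter (fun S => (and t₁ t₂).eval S = true))
        = ((t₁.events ∪ t₂.events).powerset.filter
            (fun S => t₁.eval S = true ∧ t₂.eval S = true)) := by
      apply Finset.filter_congr; intro S _
      cases h1 : eval S t₁ <;> cases h2 : eval S t₂ <;> simp [eval, h1, h2]
    have e2 : ((and t₁ t₂).events.powerset.filter (fun S => (and t₁ t₂).eval S = false))
        = ((t₁.events ∪ t₂.events).powerset.filter
            (fun S => t₁.eval S = false ∨ t₂.eval S = false)) := by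
      apply Finset.filter_congr; intro S _
      cases h1 : eval S t₁ <;> cases h2 : eval S t₂ <;> simp [eval, h1, h2]
    have H1 := e1 ▸ h₁
    have H2 := e2 ▸ h₂
    rw [Vc, v₁, v₂]
    simp only [e1, e2]
    exact Prod.ext (inf'_sum hd hc true true n₁t n₂t H1).symm
      (inf'_min hd hc false false n₁f n₂f H2).symm
  | or t₁ t₂ ih₁ ih₂ =>
    obtain ⟨hl₁, hl₂, hd⟩ := hlin
    have n₁t := filt_nonempty t₁ hl₁ true
    have n₁f := filt_nonempty t₁ hl₁ false
    have n₂t := filt_nonempty t₂ hl₂ true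
    have n₂f := filt_nonempty t₂ hl₂ false
    have v₁ := ih₁ hl₁ n₁t n₁f
    have v₂ := ih₂ hl₂ n₂t n₂f
    have e1 : ((or t₁ t₂).events.powerset.filter (fun S => (or t₁ t₂).eval S = true))
        = ((t₁.events ∪ t₂.events).powerset.filter
            (fun S => t₁.eval S = true ∨ t₂.eval S = true)) := by
      apply Finset.filter_congr; intro S _
      cases h1 : eval S t₁ <;> cases h2 : eval S t₂ <;> simp [eval, h1, h2]
    have e2 : ((or t₁ t₂).events.powerset.filter (fun S => (or t₁ t₂).eval S = false))
        = ((t₁.events ∪ t₂.events).powerset.filter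
            (fun S => t₁.eval S = false ∧ t₂.eval S = false)) := by
      apply Finset.filter_congr; intro S _
      cases h1 : eval S t₁ <;> cases h2 : eval S t₂ <;> simp [eval, h1, h2]
    have H1 := e1 ▸ h₁
    have H2 := e2 ▸ h₂
    rw [Vc, v₁, v₂]
    simp only [e1, e2]
    exact Prod.ext (inf'_min hd hc true true n₁t n₂t H1).symm
      (inf'_sum hd hc false false n₁f n₂f H2).symm
  | not t ih =>
    have hl : t.Linear := hlin
    have nt := filt_nonempty t hl true
    have nf := filt_nonempty t hl false
    have v := ih hl nt nf
    have e1 : ((ADT.not t).events.powerset.filter (fun S => (ADT.not t).eval S = true))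
        = (t.events.powerset.filter (fun S => t.eval S = false)) := by
      apply Finset.filter_congr; intro S _; simp [eval]
    have e2 : ((ADT.not t).events.powerset.filter (fun S => (ADT.not t).eval S = false))
        = (t.events.powerset.filter (fun S => t.eval S = true)) := by
      apply Finset.filter_congr; intro S _; simp [eval]
    rw [Vc, v]
    simp only [e1, e2]


end ADT
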